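/- arXiv:2603.11830 — 3 statements merged into one kernel-verified Lean document; each statement's English description precedes it below -/
import Mathlib

section
/- For any fixed unit vector p, the slowness function x ↦ f̄(x,p) = 1/f(x,p) is Lipschitz continuous with Lipschitz constant L = c̄₁ · sqrt(v̄ / (v̄ − c̄₀)⁵), independent of p. -/
/-!
The ground speed `f` along a unit direction `p` in a wind `u` is the positive root of
`‖f • p - u‖ = v`: the air velocity `h = f • p - u` has norm `v`. Subtracting these equations for
two winds `u₁, u₂` gives `(f₁ - f₂) ⟪h₁ + h₂, p⟫ = ⟪h₁ + h₂, u₁ - u₂⟫`, where `‖h₁ + h₂‖ ≤ 2v` and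
`⟪hᵢ, p⟫ ≥ √(v² - c₀²)`. Hence `f` is `v / √(v² - c₀²)`-Lipschitz in the wind, and since
`f ≥ v - c₀`, the slowness `1 / f` is `v / (√(v² - c₀²) (v - c₀)²) ≤ √(v / (v - c₀)⁵)`-Lipschitz.
Composing with the `c₁`-Lipschitz wind field gives the theorem.
-/

open scoped RealInnerProductSpace

section GroundSpeed

variable {E : Type*} [NormedAddCommGroup E] [InnerProductSpace ℝ E]

noncomputable def groundSpeed (v : ℝ) (p u : E) : ℝ :=
  √(v ^ 2 - ‖u‖ ^ 2 + ⟪u, p⟫ ^ 2) + ⟪u, p⟫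

variable {v c : ℝ} {p u u₁ u₂ : E}

lemma inner_groundSpeed_smul_sub (hp : ‖p‖ = 1) :
    ⟪groundSpeed v p u • p - u, p⟫ = √(v ^ 2 - ‖u‖ ^ 2 + ⟪u, p⟫ ^ 2) := by
  rw [inner_sub_left, real_inner_smul_left, real_inner_self_eq_norm_sq, hp, groundSpeed]
  ring

lemma norm_groundSpeed_smul_sub (hp : ‖p‖ = 1) (hu : ‖u‖ ≤ v) :
    ‖groundSpeed v p u • p - u‖ = v := by
  have hv : 0 ≤ v := (norm_nonneg u).trans hu
  have hS := Real.sq_sqrt (show 0 ≤ v ^ 2 - ‖u‖ ^ 2 + ⟪u, p⟫ ^ 2 by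
    nlinarith [norm_nonneg u, sq_nonneg ⟪u, p⟫])
  rw [← sq_eq_sq₀ (norm_nonneg _) hv, norm_sub_sq_real, norm_smul, hp, real_inner_smul_left,
    Real.norm_eq_abs, real_inner_comm, mul_one, sq_abs, groundSpeed]
  linear_combination hS

lemma groundSpeed_nonneg (hu : ‖u‖ ≤ v) : 0 ≤ groundSpeed v p u := by
  have : |⟪u, p⟫| ≤ √(v ^ 2 - ‖u‖ ^ 2 + ⟪u, p⟫ ^ 2) :=
    Real.abs_le_sqrt (by nlinarith [norm_nonneg u])
  rw [groundSpeed]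
  linarith [neg_abs_le ⟪u, p⟫]

lemma sub_norm_le_groundSpeed (hp : ‖p‖ = 1) (hu : ‖u‖ ≤ v) : v - ‖u‖ ≤ groundSpeed v p u := by
  have := norm_sub_le (groundSpeed v p u • p) u
  rw [norm_groundSpeed_smul_sub hp hu, norm_smul, hp, mul_one,
    Real.norm_of_nonneg (groundSpeed_nonneg hu)] at this
  linarith

lemma sqrt_sq_sub_sq_le_inner_groundSpeed_smul_sub (hp : ‖p‖ = 1) (hu : ‖u‖ ≤ c) :
    √(v ^ 2 - c ^ 2) ≤ ⟪groundSpeed v p u • p - u, p⟫ := by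
  rw [inner_groundSpeed_smul_sub hp]
  exact Real.sqrt_le_sqrt (by nlinarith [norm_nonneg u, sq_nonneg ⟪u, p⟫])

lemma abs_groundSpeed_sub_le (hp : ‖p‖ = 1) (hc : c < v) (hu₁ : ‖u₁‖ ≤ c) (hu₂ : ‖u₂‖ ≤ c) :
    |groundSpeed v p u₁ - groundSpeed v p u₂| ≤ v / √(v ^ 2 - c ^ 2) * ‖u₁ - u₂‖ := by
  set f₁ := groundSpeed v p u₁
  set f₂ := groundSpeed v p u₂
  set h₁ := f₁ • p - u₁
  set h₂ := f₂ • p - u₂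
  have hE : 0 < √(v ^ 2 - c ^ 2) := Real.sqrt_pos.2 (by nlinarith [norm_nonneg u₁])
  have hh₁ : ‖h₁‖ = v := norm_groundSpeed_smul_sub hp (hu₁.trans hc.le)
  have hh₂ : ‖h₂‖ = v := norm_groundSpeed_smul_sub hp (hu₂.trans hc.le)
  have key : (f₁ - f₂) * ⟪h₁ + h₂, p⟫ = ⟪h₁ + h₂, u₁ - u₂⟫ := by
    have horth := (real_inner_add_sub_eq_zero_iff h₁ h₂).2 (hh₁.trans hh₂.symm)
    rw [show h₁ - h₂ = (f₁ - f₂) • p - (u₁ - u₂) by simp only [h₁, h₂, sub_smul]; abel,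
      inner_sub_right, real_inner_smul_right] at horth
    linarith
  have hden : 2 * √(v ^ 2 - c ^ 2) ≤ ⟪h₁ + h₂, p⟫ := by
    rw [inner_add_left]
    linarith [sqrt_sq_sub_sq_le_inner_groundSpeed_smul_sub (v := v) hp hu₁,
      sqrt_sq_sub_sq_le_inner_groundSpeed_smul_sub (v := v) hp hu₂]
  have hpos : 0 < ⟪h₁ + h₂, p⟫ := hE.trans_le (by linarith)
  have hnum : ‖h₁ + h₂‖ ≤ 2 * v := by linarith [norm_add_le h₁ h₂]
  have : |f₁ - f₂| * (2 * √(v ^ 2 - c ^ 2)) ≤ 2 * v * ‖u₁ - u₂‖ :=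
    calc _ ≤ |f₁ - f₂| * ⟪h₁ + h₂, p⟫ := by gcongr
      _ = |⟪h₁ + h₂, u₁ - u₂⟫| := by rw [← key, abs_mul, abs_of_pos hpos]
      _ ≤ ‖h₁ + h₂‖ * ‖u₁ - u₂‖ := abs_real_inner_le_norm _ _
      _ ≤ 2 * v * ‖u₁ - u₂‖ := by gcongr
  rw [div_mul_eq_mul_div, le_div_iff₀ hE]
  linarith

lemma div_sqrt_sq_sub_sq_div_sq_le (hc₀ : 0 ≤ c) (hc : c < v) :
    v / √(v ^ 2 - c ^ 2) / (v - c) ^ 2 ≤ √(v / (v - c) ^ 5) := by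
  have hd : 0 < v - c := by linarith
  have hv : 0 < v := by linarith
  have hE : 0 < v ^ 2 - c ^ 2 := by nlinarith
  rw [Real.le_sqrt (by positivity) (by positivity), div_pow, div_pow, Real.sq_sqrt hE.le,
    div_div, div_le_div_iff₀ (by positivity) (by positivity)]
  calc v ^ 2 * (v - c) ^ 5 = v * (v - c) ^ 4 * (v * (v - c)) := by ring
    _ ≤ v * (v - c) ^ 4 * (v ^ 2 - c ^ 2) := by gcongr; nlinarith
    _ = v * ((v ^ 2 - c ^ 2) * ((v - c) ^ 2) ^ 2) := by ring

lemma abs_one_div_groundSpeed_sub_le (hp : ‖p‖ = 1) (hc : c < v) (hu₁ : ‖u₁‖ ≤ c)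
    (hu₂ : ‖u₂‖ ≤ c) :
    |1 / groundSpeed v p u₁ - 1 / groundSpeed v p u₂| ≤ √(v / (v - c) ^ 5) * ‖u₁ - u₂‖ := by
  have hc₀ : 0 ≤ c := (norm_nonneg u₁).trans hu₁
  have hv : 0 ≤ v := hc₀.trans hc.le
  have hd : 0 < v - c := by linarith
  have hf₁ : v - c ≤ groundSpeed v p u₁ := by
    linarith [sub_norm_le_groundSpeed hp (hu₁.trans hc.le)]
  have hf₂ : v - c ≤ groundSpeed v p u₂ := by
    linarith [sub_norm_le_groundSpeed hp (hu₂.trans hc.le)]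
  have hprod : (v - c) ^ 2 ≤ groundSpeed v p u₁ * groundSpeed v p u₂ := by
    rw [sq]; exact mul_le_mul hf₁ hf₂ hd.le (hd.le.trans hf₁)
  rw [one_div, one_div, inv_sub_inv (hd.trans_le hf₁).ne' (hd.trans_le hf₂).ne', abs_div,
    abs_of_pos ((pow_pos hd 2).trans_le hprod), abs_sub_comm]
  calc _ ≤ v / √(v ^ 2 - c ^ 2) * ‖u₁ - u₂‖ / (v - c) ^ 2 :=
        div_le_div₀ (by positivity) (abs_groundSpeed_sub_le hp hc hu₁ hu₂) (by positivity) hprod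
    _ = v / √(v ^ 2 - c ^ 2) / (v - c) ^ 2 * ‖u₁ - u₂‖ := by ring
    _ ≤ √(v / (v - c) ^ 5) * ‖u₁ - u₂‖ := by
        gcongr
        exact div_sqrt_sq_sub_sq_div_sq_le hc₀ hc

end GroundSpeed

theorem slowness_lipschitz_general
    (v c0 c1 : ℝ) (hc0 : c0 < v)
    (w : EuclideanSpace ℝ (Fin 2) → EuclideanSpace ℝ (Fin 2))
    (hw : ContDiff ℝ 1 w)
    (hwb : ∀ x, ‖w x‖ ≤ c0)
    (hwd : ∀ x, ‖fderiv ℝ w x‖ ≤ c1)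
    (p : EuclideanSpace ℝ (Fin 2)) (hp : ‖p‖ = 1) :
    ∀ x y : EuclideanSpace ℝ (Fin 2),
      |1 / (Real.sqrt (v ^ 2 - ‖w x‖ ^ 2 + ⟪w x, p⟫ ^ 2) + ⟪w x, p⟫) -
        1 / (Real.sqrt (v ^ 2 - ‖w y‖ ^ 2 + ⟪w y, p⟫ ^ 2) + ⟪w y, p⟫)| ≤
      c1 * Real.sqrt (v / (v - c0) ^ 5) * ‖x - y‖ := by
  intro x y
  have hw_lip : ‖w x - w y‖ ≤ c1 * ‖x - y‖ :=
    convex_univ.norm_image_sub_le_of_norm_fderiv_le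
      (fun z _ => (hw.differentiable one_ne_zero).differentiableAt) (fun z _ => hwd z)
      (Set.mem_univ y) (Set.mem_univ x)
  calc _ ≤ √(v / (v - c0) ^ 5) * ‖w x - w y‖ :=
        abs_one_div_groundSpeed_sub_le hp hc0 (hwb x) (hwb y)
    _ ≤ √(v / (v - c0) ^ 5) * (c1 * ‖x - y‖) := by gcongr
    _ = c1 * √(v / (v - c0) ^ 5) * ‖x - y‖ := by ring

/-- for any fixed unit vector `p`, the slowness `x ↦ 1/f(x,p)` is Lipschitz
with constant `L = c̄₁ · sqrt(v̄ / (v̄ − c̄₀)⁵)`, independent of `p`. -/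
theorem slowness_lipschitz
    (v c0 c1 : ℝ) (hv : 0 < v) (hc0 : c0 < v)
    (w : EuclideanSpace ℝ (Fin 2) → EuclideanSpace ℝ (Fin 2))
    (hw : ContDiff ℝ 1 w)
    (hwb : ∀ x, ‖w x‖ ≤ c0)
    (hwd : ∀ x, ‖fderiv ℝ w x‖ ≤ c1)
    (p : EuclideanSpace ℝ (Fin 2)) (hp : ‖p‖ = 1) :
    ∀ x y : EuclideanSpace ℝ (Fin 2),
      |1 / (Real.sqrt (v ^ 2 - ‖w x‖ ^ 2 + ⟪w x, p⟫ ^ 2) + ⟪w x, p⟫) -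
        1 / (Real.sqrt (v ^ 2 - ‖w y‖ ^ 2 + ⟪w y, p⟫ ^ 2) + ⟪w y, p⟫)| ≤
      c1 * Real.sqrt (v / (v - c0) ^ 5) * ‖x - y‖ :=
  slowness_lipschitz_general v c0 c1 hc0 w hw hwb hwd p hp
end

section
/- Let u_h, v_h be two fixed points of the Hopf–Lax update operator Λ_h with boundary data g, g' respectively on the same triangulation. If g ≤ g' on the boundary nodes, then u_h ≤ v_h at all nodes (monotonicity/comparison principle for the discrete scheme). -/
/-!
Let `M` be the maximum of `u - v` and suppose `M > 0`. Among the nodes where `M` is attained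
pick one, `z`, with the smallest value of `v`; it is interior because `g ≤ g'`. By compactness the
infimum defining `v z` is attained at a point of a segment `[a, b]` of the patch boundary, so
`v z = (1 - t) v a + t v b + τ` with a travel time `τ > 0`, while `u z ≤ (1 - t) u a + t u b + τ`.
Subtracting, `M ≤ (1 - t) (u - v) a + t (u - v) b`, so every endpoint with positive weight is a
maximiser, hence has `v ≥ v z`; then `v z ≥ v z + τ`, a contradiction.
-/

/-- The Hopf–Lax update operator on a triangulation with node type `ι`. Each interior
node `z` has a patch whose boundary is the union of the segments `[pos e.1, pos e.2]`
for `e ∈ Edges z`; a piecewise linear function takes the value `(1−t)u(e.1) + t·u(e.2)`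
at the point `(1−t)•pos e.1 + t•pos e.2` of such a segment. On boundary nodes the
update returns the boundary data `g`. -/
noncomputable def HLupdate {ι : Type*}
    (f : EuclideanSpace ℝ (Fin 2) → EuclideanSpace ℝ (Fin 2) → ℝ)
    (pos : ι → EuclideanSpace ℝ (Fin 2)) (Edges : ι → Finset (ι × ι))
    (interior : Set ι) [DecidablePred (· ∈ interior)]
    (g : ι → ℝ) (u : ι → ℝ) (z : ι) : ℝ :=
  if z ∈ interior then
    sInf {c | ∃ e ∈ Edges z, ∃ t ∈ Set.Icc (0 : ℝ) 1,
      c = (1 - t) * u e.1 + t * u e.2 +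
        ‖pos z - ((1 - t) • pos e.1 + t • pos e.2)‖ /
          f (pos z) (‖pos z - ((1 - t) • pos e.1 + t • pos e.2)‖⁻¹ •
            (pos z - ((1 - t) • pos e.1 + t • pos e.2)))}
  else g z

open Set

section ConvexStep

variable {ι : Type*} [Finite ι] {u v : ι → ℝ}

theorem le_of_forall_exists_convex_step
    (h : ∀ z, v z < u z → ∃ a b : ι, ∃ t ∈ Icc (0 : ℝ) 1,
      (1 - t) * v a + t * v b < v z ∧
        u z - v z ≤ (1 - t) * (u a - v a) + t * (u b - v b)) :
    ∀ z, u z ≤ v z := by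
  intro z₀
  by_contra! hz₀
  have : Nonempty ι := ⟨z₀⟩
  obtain ⟨m, hm⟩ := Finite.exists_max fun z => u z - v z
  obtain ⟨z, hzmax : u z - v z = u m - v m, hzmin⟩ :=
    exists_min_image {z | u z - v z = u m - v m} v (toFinite _) ⟨m, rfl⟩
  obtain ⟨a, b, t, ⟨ht₀, ht₁⟩, hlt, hstep⟩ := h z (by linarith [hm z₀])
  have weighted_le {s : ℝ} {c : ι} (hs : 0 ≤ s)
      (hc : s * (u c - v c) = s * (u m - v m)) : s * v z ≤ s * v c := by
    rcases hs.eq_or_lt with rfl | hs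
    · simp
    · exact mul_le_mul_of_nonneg_left
        (hzmin c (mul_left_cancel₀ hs.ne' hc)) hs.le
  have ha := weighted_le (s := 1 - t) (c := a) (by linarith) (by nlinarith [hm a, hm b])
  have hb := weighted_le (s := t) (c := b) ht₀ (by nlinarith [hm a, hm b])
  linarith

end ConvexStep

section TravelTime

variable {E : Type*} [NormedAddCommGroup E] [NormedSpace ℝ E]

noncomputable def travelTime (f : E → E → ℝ) (x y : E) : ℝ :=
  ‖x - y‖ / f x (‖x - y‖⁻¹ • (x - y))

theorem travelTime_pos {f : E → E → ℝ} (hfpos : ∀ x p, 0 < f x p) {x y : E} (h : x ≠ y) :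
    0 < travelTime f x y :=
  div_pos (norm_pos_iff.2 (sub_ne_zero.2 h)) (hfpos _ _)

theorem continuousOn_travelTime {f : E → E → ℝ} (hfpos : ∀ x p, 0 < f x p)
    (hfcont : Continuous fun q : E × E => f q.1 q.2) (x : E) :
    ContinuousOn (travelTime f x) {x}ᶜ := by
  have hsub : Continuous fun y : E => x - y := continuous_const.sub continuous_id
  have hdir : ContinuousOn (fun y => ‖x - y‖⁻¹ • (x - y)) {x}ᶜ :=
    (hsub.norm.continuousOn.inv₀ fun y hy =>
      norm_ne_zero_iff.2 (sub_ne_zero.2 (Ne.symm hy))).smul hsub.continuousOn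
  exact hsub.norm.continuousOn.div (hfcont.comp_continuousOn (continuousOn_const.prodMk hdir))
    fun _ _ => (hfpos _ _).ne'

end TravelTime

section Candidates

variable {ι E : Type*} [NormedAddCommGroup E] [NormedSpace ℝ E]
  {f : E → E → ℝ} {pos : ι → E} {Edges : ι → Finset (ι × ι)} {w : ι → ℝ} {z : ι}

def hopfLaxCandidates (f : E → E → ℝ) (pos : ι → E) (Edges : ι → Finset (ι × ι))
    (w : ι → ℝ) (z : ι) : Set ℝ :=
  {c | ∃ e ∈ Edges z, ∃ t ∈ Icc (0 : ℝ) 1,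
    c = (1 - t) * w e.1 + t * w e.2 + travelTime f (pos z) ((1 - t) • pos e.1 + t • pos e.2)}

theorem hopfLaxCandidates_nonempty (hE : (Edges z).Nonempty) :
    (hopfLaxCandidates f pos Edges w z).Nonempty := by
  obtain ⟨e, he⟩ := hE
  exact ⟨_, e, he, 0, ⟨le_rfl, zero_le_one⟩, rfl⟩

theorem isCompact_hopfLaxCandidates (hfpos : ∀ x p, 0 < f x p)
    (hfcont : Continuous fun q : E × E => f q.1 q.2)
    (hsep : ∀ e ∈ Edges z, ∀ t ∈ Icc (0 : ℝ) 1, pos z ≠ (1 - t) • pos e.1 + t • pos e.2) :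
    IsCompact (hopfLaxCandidates f pos Edges w z) := by
  have hunion : hopfLaxCandidates f pos Edges w z = ⋃ e ∈ (Edges z : Set (ι × ι)),
      (fun t => (1 - t) * w e.1 + t * w e.2 +
        travelTime f (pos z) ((1 - t) • pos e.1 + t • pos e.2)) '' Icc 0 1 := by
    ext c
    simp only [hopfLaxCandidates, mem_iUnion, mem_image, Finset.mem_coe]
    constructor <;> rintro ⟨e, he, t, ht, rfl⟩ <;> exact ⟨e, he, t, ht, rfl⟩
  rw [hunion]
  refine (Edges z).finite_toSet.isCompact_biUnion fun e he => isCompact_Icc.image_of_continuousOn ?_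
  have hseg : Continuous fun t : ℝ => (1 - t) • pos e.1 + t • pos e.2 := by fun_prop
  have htime := (continuousOn_travelTime hfpos hfcont (pos z)).comp hseg.continuousOn
    fun t ht => (hsep e he t ht).symm
  exact (Continuous.continuousOn (by fun_prop)).add htime

end Candidates

section Update

variable {ι : Type*} {f : EuclideanSpace ℝ (Fin 2) → EuclideanSpace ℝ (Fin 2) → ℝ}
  {pos : ι → EuclideanSpace ℝ (Fin 2)} {Edges : ι → Finset (ι × ι)}
  {interior : Set ι} [DecidablePred (· ∈ interior)] {g w : ι → ℝ} {z : ι}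

theorem HLupdate_of_mem (hz : z ∈ interior) :
    HLupdate f pos Edges interior g w z = sInf (hopfLaxCandidates f pos Edges w z) :=
  if_pos hz

theorem HLupdate_of_notMem (hz : z ∉ interior) : HLupdate f pos Edges interior g w z = g z :=
  if_neg hz

theorem HLupdate_le (hfpos : ∀ x p, 0 < f x p) (hfcont : Continuous fun q : _ × _ => f q.1 q.2)
    (hz : z ∈ interior)
    (hsep : ∀ e ∈ Edges z, ∀ t ∈ Icc (0 : ℝ) 1, pos z ≠ (1 - t) • pos e.1 + t • pos e.2)
    {e : ι × ι} (he : e ∈ Edges z) {t : ℝ} (ht : t ∈ Icc (0 : ℝ) 1) :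
    HLupdate f pos Edges interior g w z ≤
      (1 - t) * w e.1 + t * w e.2 + travelTime f (pos z) ((1 - t) • pos e.1 + t • pos e.2) := by
  rw [HLupdate_of_mem hz]
  exact csInf_le (isCompact_hopfLaxCandidates hfpos hfcont hsep).bddBelow ⟨e, he, t, ht, rfl⟩

theorem exists_HLupdate_eq (hfpos : ∀ x p, 0 < f x p)
    (hfcont : Continuous fun q : _ × _ => f q.1 q.2) (hz : z ∈ interior) (hE : (Edges z).Nonempty)
    (hsep : ∀ e ∈ Edges z, ∀ t ∈ Icc (0 : ℝ) 1, pos z ≠ (1 - t) • pos e.1 + t • pos e.2) :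
    ∃ e ∈ Edges z, ∃ t ∈ Icc (0 : ℝ) 1, HLupdate f pos Edges interior g w z =
      (1 - t) * w e.1 + t * w e.2 + travelTime f (pos z) ((1 - t) • pos e.1 + t • pos e.2) := by
  rw [HLupdate_of_mem hz]
  exact (isCompact_hopfLaxCandidates hfpos hfcont hsep).sInf_mem (hopfLaxCandidates_nonempty hE)

end Update

/-- comparison principle for the discrete Hopf–Lax scheme: if `u, v` are
fixed points of `Λ_h` with boundary data `g ≤ g'` respectively, then `u ≤ v` at all
nodes. -/
theorem hopf_lax_comparison {ι : Type*} [Fintype ι]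
    (f : EuclideanSpace ℝ (Fin 2) → EuclideanSpace ℝ (Fin 2) → ℝ)
    (hfpos : ∀ x p, 0 < f x p) (hfcont : Continuous fun q : _ × _ => f q.1 q.2)
    (pos : ι → EuclideanSpace ℝ (Fin 2)) (Edges : ι → Finset (ι × ι))
    (interior : Set ι) [DecidablePred (· ∈ interior)]
    (hEdges : ∀ z ∈ interior, (Edges z).Nonempty)
    (hsep : ∀ z ∈ interior, ∀ e ∈ Edges z, ∀ t ∈ Set.Icc (0 : ℝ) 1,
      pos z ≠ (1 - t) • pos e.1 + t • pos e.2)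
    (g g' : ι → ℝ) (hg : ∀ z, g z ≤ g' z)
    (u v : ι → ℝ)
    (hu : HLupdate f pos Edges interior g u = u)
    (hv : HLupdate f pos Edges interior g' v = v) :
    ∀ z, u z ≤ v z := by
  refine le_of_forall_exists_convex_step fun z hlt => ?_
  have hz : z ∈ interior := by
    by_contra hz
    rw [← hu, ← hv, HLupdate_of_notMem hz, HLupdate_of_notMem hz] at hlt
    exact (hg z).not_gt hlt
  obtain ⟨e, he, t, ht, hvz⟩ :=
    exists_HLupdate_eq (g := g') (w := v) hfpos hfcont hz (hEdges z hz) (hsep z hz)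
  have huz := HLupdate_le (g := g) (w := u) hfpos hfcont hz (hsep z hz) he ht
  have htime := travelTime_pos hfpos (hsep z hz e he t ht)
  rw [hu] at huz
  rw [hv] at hvz
  exact ⟨e.1, e.2, t, ht, by linarith, by linarith⟩
end

section
/- The Hopf–Lax update operator Λ_h satisfies the discrete Lipschitz-type stability bound: for a fixed point u_h of Λ_h and nodes x_h, y_h belonging to a common simplex, |u_h(x_h) − u_h(y_h)| ≤ ‖x_h − y_h‖ / (v̄ − c̄₀). -/
lemma hopf_lax_one_sided {ι : Type*} [Fintype ι]
    (v c0 : ℝ) (hv : 0 < v) (hc0 : c0 < v) (hc0' : 0 ≤ c0)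
    (f : EuclideanSpace ℝ (Fin 2) → EuclideanSpace ℝ (Fin 2) → ℝ)
    (hfb : ∀ x p, v - c0 ≤ f x p ∧ f x p ≤ v + c0)
    (pos : ι → EuclideanSpace ℝ (Fin 2)) (Edges : ι → Finset (ι × ι))
    (interior : Set ι) [DecidablePred (· ∈ interior)]
    (g : ι → ℝ) (u : ι → ℝ)
    (hu : HLupdate f pos Edges interior g u = u)
    (x y : ι) (hx : x ∈ interior)
    (hxy : ∃ e ∈ Edges x, e.1 = y) :
    u x ≤ u y + ‖pos x - pos y‖ / (v - c0) := by
  obtain ⟨e, he, he1⟩ := hxy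
  have hvc : (0:ℝ) < v - c0 := by linarith
  have hfpos : ∀ p q, 0 < f p q := fun p q => lt_of_lt_of_le hvc (hfb p q).1
  set S : Set ℝ := {c | ∃ e ∈ Edges x, ∃ t ∈ Set.Icc (0 : ℝ) 1,
      c = (1 - t) * u e.1 + t * u e.2 +
        ‖pos x - ((1 - t) • pos e.1 + t • pos e.2)‖ /
          f (pos x) (‖pos x - ((1 - t) • pos e.1 + t • pos e.2)‖⁻¹ •
            (pos x - ((1 - t) • pos e.1 + t • pos e.2)))} with hS
  have hux : u x = sInf S := by
    conv_lhs => rw [← congrFun hu x]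
    simp [HLupdate, hx, hS]
  have hne : Nonempty ι := ⟨x⟩
  have hbdd : BddBelow S := by
    refine ⟨Finset.univ.inf' ⟨x, Finset.mem_univ x⟩ u, ?_⟩
    rintro c ⟨e', -, t, ⟨ht0, ht1⟩, rfl⟩
    have hM : ∀ i : ι, Finset.univ.inf' ⟨x, Finset.mem_univ x⟩ u ≤ u i :=
      fun i => Finset.inf'_le u (Finset.mem_univ i)
    have h1 : Finset.univ.inf' ⟨x, Finset.mem_univ x⟩ u ≤ (1 - t) * u e'.1 + t * u e'.2 := by
      nlinarith [hM e'.1, hM e'.2]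
    have h2 : (0:ℝ) ≤ ‖pos x - ((1 - t) • pos e'.1 + t • pos e'.2)‖ /
          f (pos x) (‖pos x - ((1 - t) • pos e'.1 + t • pos e'.2)‖⁻¹ •
            (pos x - ((1 - t) • pos e'.1 + t • pos e'.2))) :=
      div_nonneg (norm_nonneg _) (le_of_lt (hfpos _ _))
    linarith
  have hmem : u y + ‖pos x - pos y‖ /
      f (pos x) (‖pos x - pos y‖⁻¹ • (pos x - pos y)) ∈ S := by
    refine ⟨e, he, 0, ⟨le_refl _, zero_le_one⟩, ?_⟩
    simp [he1]
  have h1 : u x ≤ u y + ‖pos x - pos y‖ /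
      f (pos x) (‖pos x - pos y‖⁻¹ • (pos x - pos y)) := by
    rw [hux]; exact csInf_le hbdd hmem
  have h2 : ‖pos x - pos y‖ /
      f (pos x) (‖pos x - pos y‖⁻¹ • (pos x - pos y)) ≤ ‖pos x - pos y‖ / (v - c0) :=
    div_le_div_of_nonneg_left (norm_nonneg _) hvc (hfb _ _).1
  linarith

/-- discrete Lipschitz stability of a Hopf–Lax fixed point: for interior
nodes `x, y` of a common simplex (each lying on the patch boundary of the other),
`|u_h(x) − u_h(y)| ≤ ‖x − y‖/(v̄ − c̄₀)`, where `v̄ − c̄₀ ≤ f ≤ v̄ + c̄₀`. -/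
theorem hopf_lax_discrete_lipschitz {ι : Type*} [Fintype ι]
    (v c0 : ℝ) (hv : 0 < v) (hc0 : c0 < v) (hc0' : 0 ≤ c0)
    (f : EuclideanSpace ℝ (Fin 2) → EuclideanSpace ℝ (Fin 2) → ℝ)
    (hfb : ∀ x p, v - c0 ≤ f x p ∧ f x p ≤ v + c0)
    (pos : ι → EuclideanSpace ℝ (Fin 2)) (Edges : ι → Finset (ι × ι))
    (interior : Set ι) [DecidablePred (· ∈ interior)]
    (g : ι → ℝ) (u : ι → ℝ)
    (hu : HLupdate f pos Edges interior g u = u)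
    (x y : ι) (hx : x ∈ interior) (hy : y ∈ interior)
    (hxy : ∃ e ∈ Edges x, e.1 = y) (hyx : ∃ e ∈ Edges y, e.1 = x) :
    |u x - u y| ≤ ‖pos x - pos y‖ / (v - c0) := by
  have h1 := hopf_lax_one_sided v c0 hv hc0 hc0' f hfb pos Edges interior g u hu x y hx hxy
  have h2 := hopf_lax_one_sided v c0 hv hc0 hc0' f hfb pos Edges interior g u hu y x hy hyx
  rw [show ‖pos y - pos x‖ = ‖pos x - pos y‖ from norm_sub_rev _ _] at h2
  rw [abs_sub_le_iff]
  constructor <;> linarith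
end
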